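/- Two distinct vertices v, w ∈ ℤ^d are *-neighbours if |w_i − v_i| ≤ 1 for all i. Suppose W ⊆ ℤ^{d−1} is finite and R ⊆ ℤ^{d−1} is the set of sites separated from infinity by W (no nearest-neighbour path from the site to infinity avoiding W). Then |R| ≤ |W|^{(d−1)/(d−2)} for d ≥ 3. -/

import Mathlib

/-!
Walking from a separated site `x` in the direction of any coordinate axis gives an
infinite self-avoiding path, so it must meet `W`: the projection of `x` along each axis
lies in the projection of `W`. Hence every axis-parallel projection of the separated
region `R ⊆ ℤ^{n}` (with `n = d - 1`) has at most `|W|` points, and the discrete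
Loomis–Whitney inequality `|R|^{n-1} ≤ ∏ᵢ |πᵢ R|` gives `|R|^{n-1} ≤ |W|^n`. Finiteness of
`R` comes from two projections, which already determine a point.
-/

variable {n : ℕ}

def adjZ (v w : Fin n → ℤ) : Prop := (∑ i, |v i - w i|) = 1

/-- x is separated from infinity by W: every infinite injective
nearest-neighbour path from x meets W. -/
def separated (W : Finset (Fin n → ℤ)) (x : Fin n → ℤ) : Prop :=
  ∀ γ : ℕ → Fin n → ℤ, γ 0 = x → (∀ k, adjZ (γ k) (γ (k + 1))) →
    Function.Injective γ → ∃ k, γ k ∈ W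

open Finset MeasureTheory
open scoped NNReal ENNReal

theorem NNReal.sum_prod_rpow_le_prod_sum_rpow {ι τ : Type*} (s : Finset ι) (t : Finset τ)
    (f : ι → τ → ℝ≥0) {p : ι → ℝ} (hp : ∑ i ∈ s, p i = 1) (hp0 : ∀ i ∈ s, 0 ≤ p i) :
    ∑ x ∈ t, ∏ i ∈ s, f i x ^ p i ≤ ∏ i ∈ s, (∑ x ∈ t, f i x) ^ p i := by
  let _ : MeasurableSpace τ := ⊤
  have holder := ENNReal.lintegral_prod_norm_pow_le (μ := Measure.count.restrict t) s
    (f := fun i x => (f i x : ℝ≥0∞)) (fun i _ => measurable_from_top.aemeasurable) hp hp0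
  simp only [lintegral_finset, Measure.count_singleton, mul_one] at holder
  rw [← ENNReal.coe_le_coe]
  push_cast
  rw [prod_congr rfl fun i hi => ENNReal.coe_rpow_of_nonneg _ (hp0 i hi), sum_congr rfl
    fun x _ => prod_congr rfl fun i hi => ENNReal.coe_rpow_of_nonneg _ (hp0 i hi)]
  push_cast
  exact holder

theorem NNReal.sum_pow_card_le_mul_prod_sum {ι τ : Type*} {s : Finset ι} (hs : s.Nonempty)
    (t : Finset τ) (a : τ → ℝ≥0) (P : ℝ≥0) (b : ι → τ → ℝ≥0)
    (h : ∀ x ∈ t, a x ^ #s ≤ P * ∏ i ∈ s, b i x) :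
    (∑ x ∈ t, a x) ^ #s ≤ P * ∏ i ∈ s, ∑ x ∈ t, b i x := by
  have hm : (0 : ℝ) < #s := by exact_mod_cast hs.card_pos
  have hq : ∑ _i ∈ s, (#s : ℝ)⁻¹ = 1 := by
    rw [sum_const, nsmul_eq_mul, mul_inv_cancel₀ hm.ne']
  rw [← NNReal.rpow_natCast, ← NNReal.le_rpow_inv_iff hm, NNReal.mul_rpow,
    ← NNReal.finsetProd_rpow]
  calc ∑ x ∈ t, a x
      ≤ ∑ x ∈ t, P ^ (#s : ℝ)⁻¹ * ∏ i ∈ s, b i x ^ (#s : ℝ)⁻¹ := by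
        refine sum_le_sum fun x hx => ?_
        rw [NNReal.finsetProd_rpow, ← NNReal.mul_rpow, NNReal.le_rpow_inv_iff hm,
          NNReal.rpow_natCast]
        exact h x hx
    _ ≤ P ^ (#s : ℝ)⁻¹ * ∏ i ∈ s, (∑ x ∈ t, b i x) ^ (#s : ℝ)⁻¹ := by
        rw [← mul_sum]
        exact mul_le_mul_right (NNReal.sum_prod_rpow_le_prod_sum_rpow s t b hq
          fun _ _ => by positivity) _

section LoomisWhitney

variable {ι α : Type*} [Fintype ι] [DecidableEq ι] [DecidableEq α] [Zero α]

theorem Finset.card_filter_apply_eq_le_card_image_update (A : Finset (ι → α)) (i : ι) (c : α) :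
    #{x ∈ A | x i = c} ≤ #(A.image (Function.update · i 0)) := by
  refine card_le_card_of_injOn _ (fun x hx => mem_image_of_mem _ (mem_filter.mp hx).1) ?_
  intro x hx y hy hxy
  have hxi := (mem_filter.mp hx).2
  have hyi := (mem_filter.mp hy).2
  have hrestore (z : ι → α) : Function.update (Function.update z i 0) i (z i) = z := by simp
  simp only at hxy
  rw [← hrestore x, ← hrestore y, hxy, hxi, hyi]

theorem Finset.sum_card_image_update_filter_le (A : Finset (ι → α)) {i j : ι} (hij : i ≠ j)
    (T : Finset α) :
    ∑ c ∈ T, #({x ∈ A | x j = c}.image (Function.update · i 0)) ≤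
      #(A.image (Function.update · i 0)) := by
  rw [← card_biUnion]
  · exact card_le_card (biUnion_subset.mpr fun c _ => image_subset_image (filter_subset _ _))
  · intro c _ c' _ hcc'
    simp only [Function.onFun, disjoint_left, mem_image, mem_filter]
    rintro _ ⟨x, ⟨-, rfl⟩, rfl⟩ ⟨y, ⟨-, rfl⟩, hxy⟩
    apply hcc'
    simpa [Function.update_of_ne hij.symm] using (congrFun hxy j).symm

theorem Finset.card_pow_le_prod_card_image_update_of_eqOn_compl (s : Finset ι) {A : Finset (ι → α)}
    (hA : A.Nonempty) (hAs : ∀ x ∈ A, ∀ y ∈ A, Set.EqOn x y (↑s)ᶜ) :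
    #A ^ (#s - 1) ≤ ∏ i ∈ s, #(A.image (Function.update · i 0)) := by
  -- Slice `A` by the value of the new coordinate `i₀`; Hölder's inequality recombines the
  -- inductive bounds for the slices, whose `i`-projections are disjoint for `i ≠ i₀`.
  induction s using Finset.induction_on generalizing A with
  | empty => simp
  | @insert i₀ s hi₀ ih =>
    rw [card_insert_of_notMem hi₀, Nat.add_sub_cancel, prod_insert hi₀]
    rcases s.eq_empty_or_nonempty with rfl | hs
    · simpa using (hA.image (Function.update · i₀ 0)).card_pos
    let slice (c : α) : Finset (ι → α) := {x ∈ A | x i₀ = c}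
    have hslice : ∀ c ∈ A.image (· i₀), #(slice c) ^ #s ≤ #(A.image (Function.update · i₀ 0)) *
        ∏ i ∈ s, #((slice c).image (Function.update · i 0)) := by
      intro c hc
      obtain ⟨x, hxA, rfl⟩ := mem_image.mp hc
      have hslice_agree : ∀ y ∈ slice (x i₀), ∀ z ∈ slice (x i₀), Set.EqOn y z (↑s)ᶜ := by
        intro y hy z hz j hj
        rcases eq_or_ne j i₀ with rfl | hji₀
        · rw [(mem_filter.mp hy).2, (mem_filter.mp hz).2]
        · exact hAs y (mem_filter.mp hy).1 z (mem_filter.mp hz).1 (by simpa [hji₀] using hj)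
      rw [← Nat.sub_one_add_one hs.card_pos.ne', pow_succ']
      exact Nat.mul_le_mul (card_filter_apply_eq_le_card_image_update A i₀ _)
        (ih ⟨x, mem_filter.mpr ⟨hxA, rfl⟩⟩ hslice_agree)
    have hholder := NNReal.sum_pow_card_le_mul_prod_sum hs (A.image (· i₀))
      (fun c => #(slice c)) #(A.image (Function.update · i₀ 0))
      (fun i c => #((slice c).image (Function.update · i 0))) (by exact_mod_cast hslice)
    calc #A ^ #s = (∑ c ∈ A.image (· i₀), #(slice c)) ^ #s := by rw [← card_eq_sum_card_image]
      _ ≤ #(A.image (Function.update · i₀ 0)) *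
          ∏ i ∈ s, ∑ c ∈ A.image (· i₀), #((slice c).image (Function.update · i 0)) := by
        exact_mod_cast hholder
      _ ≤ #(A.image (Function.update · i₀ 0)) * ∏ i ∈ s, #(A.image (Function.update · i 0)) := by
        refine Nat.mul_le_mul_left _ (prod_le_prod' fun i hi => ?_)
        exact sum_card_image_update_filter_le A (ne_of_mem_of_not_mem hi hi₀) _

theorem Finset.loomis_whitney {A : Finset (ι → α)} (hA : A.Nonempty) :
    #A ^ (Fintype.card ι - 1) ≤ ∏ i, #(A.image (Function.update · i 0)) := by
  simpa using card_pow_le_prod_card_image_update_of_eqOn_compl univ hA (by simp)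

end LoomisWhitney

theorem Function.injective_update_zero_prodMk {ι α : Type*} [DecidableEq ι] [Zero α] {i j : ι}
    (hij : i ≠ j) :
    Function.Injective fun x : ι → α => (Function.update x i 0, Function.update x j 0) := by
  intro x y hxy
  obtain ⟨hi, hj⟩ := Prod.ext_iff.mp hxy
  funext k
  rcases eq_or_ne k i with rfl | hki
  · simpa [hij] using congrFun hj k
  · simpa [hki] using congrFun hi k

theorem Real.le_rpow_div_of_pow_le {a b : ℝ} (ha : 0 ≤ a) (hb : 0 ≤ b) {k m : ℕ} (hm : m ≠ 0)
    (h : a ^ m ≤ b ^ k) : a ≤ b ^ ((k : ℝ) / m) :=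
  calc a = (a ^ m) ^ (m⁻¹ : ℝ) := (Real.pow_rpow_inv_natCast ha hm).symm
    _ ≤ (b ^ k) ^ (m⁻¹ : ℝ) := Real.rpow_le_rpow (by positivity) h (by positivity)
    _ = b ^ ((k : ℝ) / m) := by rw [← Real.rpow_natCast, ← Real.rpow_mul hb, div_eq_mul_inv]

theorem adjZ_update_add_one (x : Fin n → ℤ) (i : Fin n) (a : ℤ) :
    adjZ (Function.update x i a) (Function.update x i (a + 1)) := by
  unfold adjZ
  rw [sum_eq_single i (fun j _ hj => by simp [hj]) (by simp)]
  simp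

theorem separated.exists_update_add_mem {W : Finset (Fin n → ℤ)} {x : Fin n → ℤ}
    (hx : separated W x) (i : Fin n) : ∃ k : ℕ, Function.update x i (x i + k) ∈ W := by
  refine hx (fun k => Function.update x i (x i + k)) (by simp) (fun k => ?_) fun k l hkl => ?_
  · rw [Nat.cast_succ, ← add_assoc]
    exact adjZ_update_add_one x i _
  · simpa using congrFun hkl i

theorem separated.update_zero_mem_image {W : Finset (Fin n → ℤ)} {x : Fin n → ℤ}
    (hx : separated W x) (i : Fin n) :
    Function.update x i 0 ∈ W.image (Function.update · i 0) :=
  let ⟨_, hk⟩ := hx.exists_update_add_mem i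
  mem_image.mpr ⟨_, hk, by simp⟩

theorem card_image_update_le_of_separated {W A : Finset (Fin n → ℤ)}
    (hA : ∀ x ∈ A, separated W x) (i : Fin n) :
    #(A.image (Function.update · i 0)) ≤ #W :=
  (card_le_card (image_subset_iff.mpr fun x hx => (hA x hx).update_zero_mem_image i)).trans
    card_image_le

theorem finite_setOf_separated (hn : 2 ≤ n) (W : Finset (Fin n → ℤ)) :
    {x | separated W x}.Finite := by
  let i : Fin n := ⟨0, by omega⟩
  let j : Fin n := ⟨1, by omega⟩
  have hmaps : Set.MapsTo (fun x => (Function.update x i 0, Function.update x j 0))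
      {x | separated W x} ↑(W.image (Function.update · i 0) ×ˢ W.image (Function.update · j 0)) :=
    fun x hx => mem_coe.mpr <|
      mem_product.mpr ⟨hx.update_zero_mem_image i, hx.update_zero_mem_image j⟩
  have hij : i ≠ j := by simp [i, j, Fin.ext_iff]
  exact .of_injOn hmaps (Function.injective_update_zero_prodMk hij).injOn (finite_toSet _)

theorem loomis_whitney_separation (d : ℕ) (hd : 3 ≤ d)
    (W : Finset (Fin (d - 1) → ℤ)) :
    {x : Fin (d - 1) → ℤ | separated W x}.Finite ∧
    (({x : Fin (d - 1) → ℤ | separated W x}.ncard : ℝ) ≤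
      (W.card : ℝ) ^ (((d : ℝ) - 1) / ((d : ℝ) - 2))) := by
  have hfin := finite_setOf_separated (by omega) W
  refine ⟨hfin, ?_⟩
  rw [Set.ncard_eq_toFinset_card _ hfin]
  set A := hfin.toFinset
  rcases A.eq_empty_or_nonempty with hA | hA
  · rw [hA, card_empty, Nat.cast_zero]
    positivity
  have hLW : #A ^ (d - 2) ≤ #W ^ (d - 1) := by
    have := (loomis_whitney hA).trans <| prod_le_pow_card _ _ _ fun i _ =>
      card_image_update_le_of_separated (fun x hx => hfin.mem_toFinset.mp hx) i
    simpa [Nat.sub_sub] using this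
  have hk : ((d - 1 : ℕ) : ℝ) = d - 1 := by rw [Nat.cast_sub (by omega), Nat.cast_one]
  have hm : ((d - 2 : ℕ) : ℝ) = d - 2 := by rw [Nat.cast_sub (by omega), Nat.cast_two]
  have := Real.le_rpow_div_of_pow_le (a := #A) (b := #W) (by positivity) (by positivity)
    (by omega : d - 2 ≠ 0) (by exact_mod_cast hLW)
  rwa [hk, hm] at this
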